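/- Correctness of asynchronous R_z injection, case ZZ = 1: starting from ψ = α|0⟩ + β|1⟩ and ancilla |+⟩, projecting onto the ZZ = −1 eigenspace, applying R_z(−θ) to the ancilla, and then projecting the ancilla onto |+⟩ (resp. |−⟩) and discarding it, yields up to a nonzero scalar R_z(θ)ψ (resp. Z·R_z(θ)ψ). -/

import Mathlib

open Complex

noncomputable def plusV : Fin 2 → ℂ := fun _ => 1 / Real.sqrt 2

noncomputable def minusV : Fin 2 → ℂ :=
  fun i => if i = 0 then (1 / Real.sqrt 2 : ℂ) else -(1 / Real.sqrt 2)

/-- `ψ = α|0⟩ + β|1⟩`. -/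
def psi (a b : ℂ) : Fin 2 → ℂ := fun i => if i = 0 then a else b

/-- Data qubit in `ψ`, ancilla in `|+⟩`. -/
noncomputable def init (a b : ℂ) : Fin 2 × Fin 2 → ℂ := fun p => psi a b p.1 * plusV p.2

/-- The `ZZ = −1` projector `|01⟩⟨01| + |10⟩⟨10|`. -/
def P1 (v : Fin 2 × Fin 2 → ℂ) : Fin 2 × Fin 2 → ℂ :=
  fun p => if p.1 ≠ p.2 then v p else 0

/-- `R_z(φ)` applied to the ancilla. -/
noncomputable def rzAncilla (φ : ℝ) (v : Fin 2 × Fin 2 → ℂ) : Fin 2 × Fin 2 → ℂ :=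
  fun p => (if p.2 = 0 then 1 else Complex.exp (φ * Complex.I)) * v p

noncomputable def projPlus (v : Fin 2 × Fin 2 → ℂ) : Fin 2 → ℂ :=
  fun i => ∑ j : Fin 2, plusV j * v (i, j)

noncomputable def projMinus (v : Fin 2 × Fin 2 → ℂ) : Fin 2 → ℂ :=
  fun i => ∑ j : Fin 2, minusV j * v (i, j)

/-- Asynchronous R_z injection, case `ZZ = 1`: projecting onto the `ZZ = −1`
eigenspace, applying `R_z(−θ)` to the ancilla, and measuring the ancilla in the X
basis yields `R_z(θ)ψ` (outcome `+`), resp. `Z·R_z(θ)ψ` (outcome `−`),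
up to nonzero scalars. -/
theorem rz_injection_zz1 (a b : ℂ) (θ : ℝ) :
    (∃ s : ℂ, s ≠ 0 ∧
      projPlus (rzAncilla (-θ) (P1 (init a b)))
        = fun i => s * ((if i = 0 then 1 else Complex.exp (θ * Complex.I)) * psi a b i)) ∧
    (∃ s : ℂ, s ≠ 0 ∧
      projMinus (rzAncilla (-θ) (P1 (init a b)))
        = fun i => s * ((if i = 0 then (1 : ℂ) else -1) *
            ((if i = 0 then 1 else Complex.exp (θ * Complex.I)) * psi a b i))) := by
  have h2 : (Real.sqrt 2 : ℂ) * (Real.sqrt 2 : ℂ) = 2 := by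
    norm_cast; exact Real.mul_self_sqrt (by norm_num)
  have hexp : Complex.exp (-(θ * Complex.I)) * Complex.exp (θ * Complex.I) = 1 := by
    rw [← Complex.exp_add]; ring_nf; exact Complex.exp_zero
  constructor
  · refine ⟨Complex.exp (-θ * Complex.I) / 2,
      div_ne_zero (Complex.exp_ne_zero _) two_ne_zero, ?_⟩
    funext i
    fin_cases i <;>
      simp [projPlus, rzAncilla, P1, init, psi, plusV, Fin.sum_univ_two] <;>
      field_simp
    · linear_combination (-a) * h2
    · linear_combination (-b * Complex.exp (-(θ * Complex.I)) * Complex.exp (θ * Complex.I)) * h2 - 2 * b * hexp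
  · refine ⟨-(Complex.exp (-θ * Complex.I) / 2), by simp [Complex.exp_ne_zero], ?_⟩
    funext i
    fin_cases i <;>
      simp [projMinus, rzAncilla, P1, init, psi, plusV, minusV, Fin.sum_univ_two] <;>
      field_simp
    · linear_combination (-a) * h2
    · linear_combination (-b * Complex.exp (-(θ * Complex.I)) * Complex.exp (θ * Complex.I)) * h2 - 2 * b * hexp
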